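/- Let A be a row-regular sparsified matrix (every finite entry a_{ij} ≥ p_i - Δ - q_j), p nonzero, q all finite, Δ = max_i(p_i - max_j(a_{ij}+q_j)). Then every x ∈ ℝ^n satisfying α + (A⁻p)_j - Δ ≤ x_j ≤ α + q_j for all j (for some α ∈ ℝ), where (A⁻p)_j = max_i(p_i - a_{ij}) over i with a_{ij} finite, achieves the minimum value Δ of f(x) = max_j(x_j - q_j) + max_i(p_i - max_j(a_{ij}+x_j)). -/

import Mathlib

/-- The max-plus objective `q⁻ x (A x)⁻ p`. -/
noncomputable def tropObj (m n : ℕ) (a : Matrix (Fin m) (Fin n) EReal)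
    (p : Fin m → EReal) (q x : Fin n → ℝ) : EReal :=
  (⨆ j, ((x j - q j : ℝ) : EReal)) +
    ⨆ i, (p i - ⨆ j, (a i j + ((x j : ℝ) : EReal)))

/-- The minimum value `Δ = (A q)⁻ p`. -/
noncomputable def tropDelta (m n : ℕ) (a : Matrix (Fin m) (Fin n) EReal)
    (p : Fin m → EReal) (q : Fin n → ℝ) : EReal :=
  ⨆ i, (p i - ⨆ j, (a i j + ((q j : ℝ) : EReal)))

/-! For every `x`, `(A x)_i ≤ (A q)_i + max_j (x_j - q_j)`, so `Δ` bounds the objective from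
below. On the box, `max_j (x_j - q_j) ≤ α`, while its lower bound gives
`(A x)_i ≥ a_ij + x_j ≥ α + p_i - Δ` for any finite `a_ij` in row `i`, of which row-regularity
provides one; hence the second summand of the objective is at most `Δ - α`. -/

namespace EReal

lemma iSup_add_coe_le_iSup_add_coe_add {ι : Type*} (a : ι → EReal) {u v : ι → ℝ} {b : ℝ}
    (h : ∀ j, u j ≤ v j + b) : ⨆ j, (a j + u j) ≤ (⨆ j, (a j + v j)) + b :=
  iSup_le fun j =>
    calc a j + u j ≤ a j + v j + b := by
          rw [add_assoc, ← EReal.coe_add]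
          exact add_le_add le_rfl (EReal.coe_le_coe_iff.2 (h j))
      _ ≤ (⨆ j, (a j + v j)) + b := add_le_add (le_iSup (fun j => a j + v j) j) le_rfl

lemma sub_le_sub_add_coe {p s t : EReal} {b : ℝ} (h : t ≤ s + b) : p - s ≤ p - t + b := by
  induction p using EReal.rec <;> induction s using EReal.rec <;> induction t using EReal.rec <;>
    norm_cast at * <;> simp_all
  all_goals linarith

lemma sub_add_coe_le_sub_coe {p a d : EReal} {x c : ℝ} (ha : a ≠ ⊥)
    (h : c + (p - a) - d ≤ x) : p - (a + x) ≤ d - c := by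
  induction p using EReal.rec <;> induction a using EReal.rec <;> induction d using EReal.rec <;>
    norm_cast at * <;> simp_all
  all_goals linarith

end EReal

section

variable {m n : ℕ} {a : Matrix (Fin m) (Fin n) EReal} {p : Fin m → EReal} {q : Fin n → ℝ}

lemma tropDelta_le_tropObj (harow : ∀ i, ∃ j, a i j ≠ ⊥) (x : Fin n → ℝ) :
    tropDelta m n a p q ≤ tropObj m n a p q x := by
  refine iSup_le fun i => ?_
  have : Nonempty (Fin n) := ⟨(harow i).choose⟩
  obtain ⟨k, hk⟩ := Finite.exists_max fun j => x j - q j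
  have hshift : ⨆ j, (a i j + ((x j : ℝ) : EReal)) ≤
      (⨆ j, (a i j + ((q j : ℝ) : EReal))) + (x k - q k : ℝ) :=
    EReal.iSup_add_coe_le_iSup_add_coe_add (a i) fun j => by linarith [hk j]
  calc p i - ⨆ j, (a i j + ((q j : ℝ) : EReal))
      ≤ p i - (⨆ j, (a i j + ((x j : ℝ) : EReal))) + (x k - q k : ℝ) :=
        EReal.sub_le_sub_add_coe hshift
    _ ≤ (⨆ i, (p i - ⨆ j, (a i j + ((x j : ℝ) : EReal)))) +
          ⨆ j, ((x j - q j : ℝ) : EReal) :=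
        add_le_add (le_iSup (fun i => p i - ⨆ j, (a i j + ((x j : ℝ) : EReal))) i)
          (le_iSup (fun j => ((x j - q j : ℝ) : EReal)) k)
    _ = tropObj m n a p q x := add_comm _ _

lemma tropObj_le_tropDelta (harow : ∀ i, ∃ j, a i j ≠ ⊥) {x : Fin n → ℝ} {α : ℝ}
    (hle : ∀ j, x j ≤ α + q j)
    (hge : ∀ i j, a i j ≠ ⊥ → α + (p i - a i j) - tropDelta m n a p q ≤ x j) :
    tropObj m n a p q x ≤ tropDelta m n a p q := by
  set Δ := tropDelta m n a p q
  have hcol : ⨆ j, ((x j - q j : ℝ) : EReal) ≤ α :=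
    iSup_le fun j => EReal.coe_le_coe_iff.2 (by linarith [hle j])
  have hrow : ⨆ i, (p i - ⨆ j, (a i j + ((x j : ℝ) : EReal))) ≤ Δ - α := by
    refine iSup_le fun i => ?_
    obtain ⟨j, hj⟩ := harow i
    calc p i - ⨆ j, (a i j + ((x j : ℝ) : EReal)) ≤ p i - (a i j + x j) :=
          EReal.sub_le_sub le_rfl (le_iSup (fun j => a i j + ((x j : ℝ) : EReal)) j)
      _ ≤ Δ - α := EReal.sub_add_coe_le_sub_coe hj (hge i j hj)
  calc tropObj m n a p q x ≤ α + (Δ - α) := add_le_add hcol hrow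
    _ = Δ := by rw [add_comm, EReal.sub_add_cancel]

end

open Classical in
theorem trop_extended_solution_general (m n : ℕ) (a : Matrix (Fin m) (Fin n) EReal)
    (harow : ∀ i, ∃ j, a i j ≠ ⊥)
    (p : Fin m → EReal)
    (q : Fin n → ℝ)
    (x : Fin n → ℝ) (α : ℝ)
    (hbox : ∀ j, (α : EReal) + (⨆ i, if a i j = ⊥ then (⊥ : EReal) else p i - a i j)
        - tropDelta m n a p q ≤ ((x j : ℝ) : EReal) ∧
      ((x j : ℝ) : EReal) ≤ (α : EReal) + ((q j : ℝ) : EReal)) :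
    tropObj m n a p q x = tropDelta m n a p q := by
  refine le_antisymm (tropObj_le_tropDelta (α := α) harow (fun j => ?_) fun i j hij => ?_)
    (tropDelta_le_tropObj harow x)
  · exact_mod_cast (hbox j).2
  · refine le_trans (EReal.sub_le_sub (add_le_add le_rfl ?_) le_rfl) (hbox j).1
    exact le_iSup_of_le i (if_neg hij).ge

open Classical in
/-- Extended solution set: for a row-regular sparsified matrix `A`, every vector `x` with
`α Δ⁻¹ A⁻ p ≤ x ≤ α q` for some real `α` attains the minimum value `Δ`. -/
theorem trop_extended_solution (m n : ℕ) (a : Matrix (Fin m) (Fin n) EReal)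
    (hatop : ∀ i j, a i j ≠ ⊤) (harow : ∀ i, ∃ j, a i j ≠ ⊥)
    (p : Fin m → EReal) (hptop : ∀ i, p i ≠ ⊤) (hp : ∃ i, p i ≠ ⊥)
    (q : Fin n → ℝ)
    (hsparse : ∀ i j, a i j ≠ ⊥ → p i - tropDelta m n a p q - ((q j : ℝ) : EReal) ≤ a i j)
    (x : Fin n → ℝ) (α : ℝ)
    (hbox : ∀ j, (α : EReal) + (⨆ i, if a i j = ⊥ then (⊥ : EReal) else p i - a i j)
        - tropDelta m n a p q ≤ ((x j : ℝ) : EReal) ∧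
      ((x j : ℝ) : EReal) ≤ (α : EReal) + ((q j : ℝ) : EReal)) :
    tropObj m n a p q x = tropDelta m n a p q :=
  trop_extended_solution_general m n a harow p q x α hbox
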